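/- Let m ≥ 1 and l > k > 0 be natural numbers with 3k + 1 ≥ 2l, and let A = ℝ^l_m be the truncated polynomial algebra with maximal ideal 𝔪_A. Then for any two ℝ-algebra automorphisms σ, σ' of A with σ(a) − σ'(a) ∈ 𝔪_A^{k+1} for all a ∈ A, there exists a unique ℝ-derivation D : A → A taking values in 𝔪_A^{k+1} such that σ'(a) = σ(a) + σ(D(a)) for all a ∈ A. -/

import Mathlib

set_option synthInstance.maxHeartbeats 400000

noncomputable section

/-- The ideal of `ℝ[ξ₁,…,ξ_m]` generated by the variables. -/
def varIdeal (m : ℕ) : Ideal (MvPolynomial (Fin m) ℝ) :=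
  Ideal.span (Set.range MvPolynomial.X)

/-- The truncated polynomial algebra `ℝ^l_m = ℝ[ξ₁,…,ξ_m]/𝔪^{l+1}`. -/
abbrev TruncPolyAlg (m l : ℕ) : Type :=
  MvPolynomial (Fin m) ℝ ⧸ (varIdeal m) ^ (l + 1)

/-- The maximal ideal of `ℝ^l_m`, the image of the ideal of variables. -/
def truncMaxIdeal (m l : ℕ) : Ideal (TruncPolyAlg m l) :=
  (varIdeal m).map (Ideal.Quotient.mk ((varIdeal m) ^ (l + 1)))

/-! `𝔪_A` is prime with `𝔪_A^{l+1} = 0`, so it is the nilradical of `A` and every automorphism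
preserves its powers. Hence `τ = σ⁻¹ ∘ σ'` moves each element by something in `I = 𝔪_A^{k+1}`,
and `I² ⊆ 𝔪_A^{2k+2} = 0` because `l ≤ 2k + 1`. Expanding `τ (a b) = τ a · τ b` then shows that
`τ - id` is a derivation, and it is the only candidate since `σ` is injective. -/

section SquareZero

variable {R A : Type*} [CommRing R] [CommRing A] [Algebra R A]

def AlgHom.derivationSubId (τ : A →ₐ[R] A) {I : Ideal A} (hI : I ^ 2 = ⊥)
    (hτ : ∀ a, τ a - a ∈ I) : Derivation R A A where
  toLinearMap := τ.toLinearMap - LinearMap.id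
  map_one_eq_zero' := by simp
  leibniz' a b := by
    have hsq : (τ a - a) * (τ b - b) = 0 := by
      have := Ideal.mul_mem_mul (hτ a) (hτ b)
      rwa [← pow_two, hI, Ideal.mem_bot] at this
    simp only [LinearMap.sub_apply, AlgHom.toLinearMap_apply, LinearMap.id_apply, map_mul,
      smul_eq_mul]
    linear_combination hsq

@[simp]
lemma AlgHom.derivationSubId_apply (τ : A →ₐ[R] A) {I : Ideal A} (hI : I ^ 2 = ⊥)
    (hτ : ∀ a, τ a - a ∈ I) (a : A) : τ.derivationSubId hI hτ a = τ a - a :=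
  rfl

end SquareZero

lemma Ideal.eq_nilradical_of_pow_eq_bot {A : Type*} [CommRing A] (I : Ideal A) [I.IsPrime]
    {n : ℕ} (hn : I ^ n = ⊥) : I = nilradical A :=
  le_antisymm (fun x hx => ⟨n, by simpa [hn] using Ideal.pow_mem_pow hx n⟩) (nilradical_le_prime I)

lemma RingEquiv.map_nilradical {A B : Type*} [CommRing A] [CommRing B] (e : A ≃+* B) :
    (nilradical A).map e = nilradical B := by
  rw [← Ideal.comap_symm, nilradical, Ideal.comap_radical, Submodule.zero_eq_bot,
    Ideal.comap_bot_of_injective _ e.symm.injective, nilradical, Submodule.zero_eq_bot]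

lemma varIdeal_eq_ker_constantCoeff (m : ℕ) :
    varIdeal m = RingHom.ker (MvPolynomial.constantCoeff (σ := Fin m) (R := ℝ)) := by
  ext p
  rw [← pow_one (varIdeal m), varIdeal, ← MvPolynomial.idealOfVars,
    MvPolynomial.mem_pow_idealOfVars_iff', RingHom.mem_ker]
  simp [Finsupp.degree_eq_zero_iff, MvPolynomial.constantCoeff_eq]

instance varIdeal_isMaximal (m : ℕ) : (varIdeal m).IsMaximal := by
  rw [varIdeal_eq_ker_constantCoeff]
  exact RingHom.ker_isMaximal_of_surjective _
    fun r => ⟨MvPolynomial.C r, MvPolynomial.constantCoeff_C _ r⟩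

instance truncMaxIdeal_isPrime (m l : ℕ) : (truncMaxIdeal m l).IsPrime :=
  Ideal.map_isPrime_of_surjective Ideal.Quotient.mk_surjective
    (by rw [Ideal.mk_ker]; exact Ideal.pow_le_self l.succ_ne_zero)

lemma truncMaxIdeal_pow_eq_bot (m l : ℕ) : truncMaxIdeal m l ^ (l + 1) = ⊥ := by
  rw [truncMaxIdeal, ← Ideal.map_pow, Ideal.map_quotient_self]

lemma truncMaxIdeal_eq_nilradical (m l : ℕ) : truncMaxIdeal m l = nilradical (TruncPolyAlg m l) :=
  Ideal.eq_nilradical_of_pow_eq_bot _ (truncMaxIdeal_pow_eq_bot m l)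

lemma map_truncMaxIdeal_pow (m l n : ℕ) (e : TruncPolyAlg m l ≃+* TruncPolyAlg m l) :
    (truncMaxIdeal m l ^ n).map e = truncMaxIdeal m l ^ n := by
  rw [Ideal.map_pow, truncMaxIdeal_eq_nilradical, e.map_nilradical]

lemma truncMaxIdeal_pow_sq_eq_bot {m l k : ℕ} (h : l ≤ 2 * k + 1) :
    (truncMaxIdeal m l ^ (k + 1)) ^ 2 = ⊥ := by
  have hle : (truncMaxIdeal m l ^ (k + 1)) ^ 2 ≤ truncMaxIdeal m l ^ (l + 1) := by
    rw [← pow_mul (truncMaxIdeal m l)]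
    exact Ideal.pow_le_pow_right (by omega)
  exact eq_bot_mono hle (truncMaxIdeal_pow_eq_bot m l)

theorem affine_structure_on_jet_groups_general (m l k : ℕ)
    (h : 3 * k + 1 ≥ 2 * l)
    (σ σ' : TruncPolyAlg m l ≃ₐ[ℝ] TruncPolyAlg m l)
    (hσ : ∀ a : TruncPolyAlg m l, σ a - σ' a ∈ truncMaxIdeal m l ^ (k + 1)) :
    ∃! D : Derivation ℝ (TruncPolyAlg m l) (TruncPolyAlg m l),
      (∀ a : TruncPolyAlg m l, D a ∈ truncMaxIdeal m l ^ (k + 1)) ∧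
        ∀ a : TruncPolyAlg m l, σ' a = σ a + σ (D a) := by
  set τ : TruncPolyAlg m l →ₐ[ℝ] TruncPolyAlg m l := (σ'.trans σ.symm).toAlgHom
  have hτ (a : TruncPolyAlg m l) : τ a - a ∈ truncMaxIdeal m l ^ (k + 1) := by
    have := Ideal.mem_map_of_mem σ.symm.toRingEquiv (neg_mem (hσ a))
    rwa [map_truncMaxIdeal_pow, neg_sub, map_sub, AlgEquiv.coe_ringEquiv,
      σ.symm_apply_apply] at this
  have hD_eq (D : Derivation ℝ (TruncPolyAlg m l) (TruncPolyAlg m l)) (a : TruncPolyAlg m l)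
      (hD : σ' a = σ a + σ (D a)) : D a = τ a - a :=
    σ.injective (by simp [τ, hD])
  refine ⟨τ.derivationSubId (truncMaxIdeal_pow_sq_eq_bot (by omega)) hτ, ⟨hτ, fun a => ?_⟩,
    fun D hD => Derivation.ext fun a => hD_eq D a (hD.2 a)⟩
  simp [τ]

/-- Let `m ≥ 1` and `l > k > 0` with `3k + 1 ≥ 2l`, and let
`A = ℝ^l_m`.  For any two ℝ-algebra automorphisms `σ, σ'` of `A` with
`σ a - σ' a ∈ 𝔪_A^{k+1}` for all `a`, there is a unique ℝ-derivation
`D : A → A` taking values in `𝔪_A^{k+1}` such that `σ' a = σ a + σ (D a)` for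
all `a` (affine structure of the jet-group projection `G^l_m → G^k_m`). -/
theorem affine_structure_on_jet_groups (m l k : ℕ)
    (hm : 1 ≤ m) (hk : 0 < k) (hkl : k < l) (h : 3 * k + 1 ≥ 2 * l)
    (σ σ' : TruncPolyAlg m l ≃ₐ[ℝ] TruncPolyAlg m l)
    (hσ : ∀ a : TruncPolyAlg m l, σ a - σ' a ∈ truncMaxIdeal m l ^ (k + 1)) :
    ∃! D : Derivation ℝ (TruncPolyAlg m l) (TruncPolyAlg m l),
      (∀ a : TruncPolyAlg m l, D a ∈ truncMaxIdeal m l ^ (k + 1)) ∧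
        ∀ a : TruncPolyAlg m l, σ' a = σ a + σ (D a) :=
  affine_structure_on_jet_groups_general m l k h σ σ' hσ
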